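/- Let φ₂ = T₂ - (1/3)T₁² and φ₃ = T₃ - T₂T₁ + (2/9)T₁³, where T_j = ξ₁^j + ξ₂^j + ξ₃^j are power sums in three variables. Then L(φ₂) = 0 and L(φ₃) = 0, where L = ∂/∂ξ₁ + ∂/∂ξ₂ + ∂/∂ξ₃; moreover the dimension of the kernel of L on homogeneous symmetric polynomials of degree k equals the number of nonnegative integer solutions (a,b) of 2a+3b = k, with basis given by the monomials φ₂^a φ₃^b. -/

import Mathlib

noncomputable section

open MvPolynomial

/-- The `j`-th power sum `T_j = ξ₁^j + ξ₂^j + ξ₃^j` in three variables. -/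
def pw (j : ℕ) : MvPolynomial (Fin 3) ℂ := (X 0) ^ j + (X 1) ^ j + (X 2) ^ j

/-- `φ₂ = T₂ - (1/3)T₁²`. -/
def φ2 : MvPolynomial (Fin 3) ℂ := pw 2 - C (1 / 3 : ℂ) * (pw 1) ^ 2

/-- `φ₃ = T₃ - T₂T₁ + (2/9)T₁³`. -/
def φ3 : MvPolynomial (Fin 3) ℂ := pw 3 - pw 2 * pw 1 + C (2 / 9 : ℂ) * (pw 1) ^ 3

/-- The operator `L = ∂/∂ξ₁ + ∂/∂ξ₂ + ∂/∂ξ₃`. -/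
def Lop (p : MvPolynomial (Fin 3) ℂ) : MvPolynomial (Fin 3) ℂ :=
  pderiv 0 p + pderiv 1 p + pderiv 2 p

/-!
By the fundamental theorem on symmetric polynomials and Newton's identities, the symmetric
polynomials in three variables are freely generated by `T₁, φ₂, φ₃`: `F ↦ F(T₁, φ₂, φ₃)` is an
isomorphism onto them, being a triangular change of generators followed by `F ↦ F(e₁, e₂, e₃)`.
Since `L` is a derivation with `L T₁ = 3` and `L φ₂ = L φ₃ = 0`, the chain rule gives
`L (F(T₁, φ₂, φ₃)) = 3 (∂F/∂x₀)(T₁, φ₂, φ₃)`. Hence the kernel of `L` on symmetric polynomials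
is the image of the polynomials free of `x₀`, i.e. the span of the linearly independent
`φ₂^a φ₃^b`; as `φ₂^a φ₃^b` is homogeneous of degree `2a + 3b`, taking the homogeneous
component of degree `k` keeps exactly those with `2a + 3b = k`.
-/

theorem Derivation.map_aeval_mvPolynomial {R A M σ : Type*} [CommSemiring R] [CommSemiring A]
    [Algebra R A] [AddCommMonoid M] [Module R M] [Module A M] [IsScalarTower R A M] [Fintype σ]
    (D : Derivation R A M) (f : σ → A) (F : MvPolynomial σ R) :
    D (aeval f F) = ∑ i, aeval f (pderiv i F) • D (f i) := by
  classical
  induction F using MvPolynomial.induction_on with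
  | C a => simp
  | add p q hp hq => simp only [map_add, hp, hq, add_smul, Finset.sum_add_distrib]
  | mul_X p i hp =>
    simp [pderiv_X, Pi.single_apply, apply_ite (aeval f), ite_smul, add_smul,
      Finset.sum_add_distrib, hp, Finset.smul_sum, mul_smul, smul_comm (f i)]

theorem MvPolynomial.apply_eq_zero_of_mem_support_of_pderiv_eq_zero {σ R : Type*}
    [CommSemiring R] [NoZeroDivisors R] [CharZero R] {F : MvPolynomial σ R} {i : σ}
    (hF : pderiv i F = 0) {m : σ →₀ ℕ} (hm : m ∈ F.support) : m i = 0 := by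
  by_contra hmi
  have hm' : m - Finsupp.single i 1 + Finsupp.single i 1 = m :=
    tsub_add_cancel_of_le (Finsupp.single_le_iff.2 (Nat.one_le_iff_ne_zero.2 hmi))
  have h := coeff_pderiv (i := i) F (m - Finsupp.single i 1)
  rw [hF, coeff_zero, hm', eq_comm, mul_eq_zero] at h
  exact h.elim (mem_support_iff.1 hm) (by norm_cast)

theorem MvPolynomial.mem_span_of_isHomogeneous_of_mem_span {σ R ι : Type*} [CommSemiring R]
    {v : ι → MvPolynomial σ R} {deg : ι → ℕ} (hv : ∀ i, (v i).IsHomogeneous (deg i))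
    {p : MvPolynomial σ R} {k : ℕ} (hp : p.IsHomogeneous k)
    (h : p ∈ Submodule.span R (Set.range v)) :
    p ∈ Submodule.span R (Set.range fun i : {i // deg i = k} => v i) := by
  have hk := Submodule.mem_map_of_mem (f := homogeneousComponent k) h
  rw [homogeneousComponent_of_mem hp, if_pos rfl, Submodule.map_span, ← Set.range_comp] at hk
  refine Submodule.span_le.2 ?_ hk
  rintro _ ⟨i, rfl⟩
  rw [Function.comp_apply, homogeneousComponent_of_mem (hv i)]
  split_ifs with hi
  · exact Submodule.subset_span ⟨⟨i, hi.symm⟩, rfl⟩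
  · exact Submodule.zero_mem _

def totalDeriv : Derivation ℂ (MvPolynomial (Fin 3) ℂ) (MvPolynomial (Fin 3) ℂ) :=
  pderiv 0 + pderiv 1 + pderiv 2

theorem Lop_eq_totalDeriv (p : MvPolynomial (Fin 3) ℂ) : Lop p = totalDeriv p := rfl

theorem totalDeriv_X (i : Fin 3) : totalDeriv (X i) = 1 := by
  fin_cases i <;> simp [totalDeriv, pderiv_X]

theorem pw_zero : pw 0 = 3 := by norm_num [pw]

theorem totalDeriv_pw (j : ℕ) : totalDeriv (pw (j + 1)) = (j + 1) * pw j := by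
  simp only [pw, map_add, Derivation.leibniz_pow, add_tsub_cancel_right, totalDeriv_X, smul_eq_mul,
    mul_one, nsmul_eq_mul, Nat.cast_add, Nat.cast_one]
  ring

theorem Lop_φ2 : Lop φ2 = 0 := by
  have h : (C (1 / 3 : ℂ) : MvPolynomial (Fin 3) ℂ) * 3 = 1 := by
    rw [← map_ofNat C, ← map_mul]; norm_num
  have h1 := totalDeriv_pw 0
  have h2 := totalDeriv_pw 1
  simp only [pw_zero] at h1 h2
  rw [Lop_eq_totalDeriv, φ2, map_sub, Derivation.leibniz, derivation_C, Derivation.leibniz_pow,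
    h1, h2]
  simp only [smul_eq_mul, nsmul_eq_mul]
  linear_combination (-2 * pw 1) * h

theorem Lop_φ3 : Lop φ3 = 0 := by
  have h : (C (2 / 9 : ℂ) : MvPolynomial (Fin 3) ℂ) * 9 = 2 := by
    rw [← map_ofNat C, ← map_ofNat C 2, ← map_mul]; norm_num
  have h1 := totalDeriv_pw 0
  have h2 := totalDeriv_pw 1
  have h3 := totalDeriv_pw 2
  simp only [pw_zero] at h1 h2 h3
  rw [Lop_eq_totalDeriv, φ3, map_add, map_sub, Derivation.leibniz, Derivation.leibniz,
    derivation_C, Derivation.leibniz_pow, h1, h2, h3]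
  simp only [smul_eq_mul, nsmul_eq_mul]
  push_cast
  linear_combination (pw 1 ^ 2) * h

theorem esymm_two_fin_three : esymm (Fin 3) ℂ 2 = X 0 * X 1 + X 0 * X 2 + X 1 * X 2 := by
  rw [esymm, show Finset.powersetCard 2 (Finset.univ : Finset (Fin 3)) = {{0, 1}, {0, 2}, {1, 2}}
    by decide, Finset.sum_insert (by decide), Finset.sum_insert (by decide), Finset.sum_singleton]
  simp [add_assoc]

theorem esymm_three_fin_three : esymm (Fin 3) ℂ 3 = X 0 * X 1 * X 2 := by
  rw [esymm, show Finset.powersetCard 3 (Finset.univ : Finset (Fin 3)) = {Finset.univ} by decide]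
  simp [Fin.prod_univ_three]

-- Newton's identities: `T₁ = e₁`, `φ₂ = (2/3)e₁² - 2e₂`, `φ₃ = (2/9)e₁³ - e₁e₂ + 3e₃`.
def gensViaEsymm : Fin 3 → MvPolynomial (Fin 3) ℂ :=
  ![X 0, C (2 / 3) * X 0 ^ 2 - C 2 * X 1, C (2 / 9) * X 0 ^ 3 - X 0 * X 1 + C 3 * X 2]

def esymmViaGens : Fin 3 → MvPolynomial (Fin 3) ℂ :=
  ![X 0, C (1 / 3) * X 0 ^ 2 - C (1 / 2) * X 1,
    C (1 / 27) * X 0 ^ 3 - C (1 / 6) * X 0 * X 1 + C (1 / 3) * X 2]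

theorem aeval_esymmViaGens_comp_aeval_gensViaEsymm :
    (aeval esymmViaGens).comp (aeval gensViaEsymm) = AlgHom.id ℂ (MvPolynomial (Fin 3) ℂ) := by
  refine algHom_ext fun i => MvPolynomial.funext fun x => ?_
  fin_cases i <;> simp [gensViaEsymm, esymmViaGens] <;> ring

theorem aeval_gensViaEsymm_comp_aeval_esymmViaGens :
    (aeval gensViaEsymm).comp (aeval esymmViaGens) = AlgHom.id ℂ (MvPolynomial (Fin 3) ℂ) := by
  refine algHom_ext fun i => MvPolynomial.funext fun x => ?_
  fin_cases i <;> simp [gensViaEsymm, esymmViaGens] <;> ring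

def changeOfGenerators : MvPolynomial (Fin 3) ℂ ≃ₐ[ℂ] MvPolynomial (Fin 3) ℂ :=
  AlgEquiv.ofAlgHom (aeval gensViaEsymm) (aeval esymmViaGens)
    aeval_gensViaEsymm_comp_aeval_esymmViaGens aeval_esymmViaGens_comp_aeval_gensViaEsymm

def gens : Fin 3 → MvPolynomial (Fin 3) ℂ := ![pw 1, φ2, φ3]

theorem aeval_esymm_comp_aeval_gensViaEsymm :
    (aeval fun i : Fin 3 => esymm (Fin 3) ℂ (i + 1)).comp (aeval gensViaEsymm) = aeval gens := by
  refine algHom_ext fun i => MvPolynomial.funext fun x => ?_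
  fin_cases i <;>
    simp [gensViaEsymm, gens, φ2, φ3, pw, Fin.sum_univ_three, esymm_two_fin_three,
      esymm_three_fin_three] <;> ring

def gensEquiv : MvPolynomial (Fin 3) ℂ ≃ₐ[ℂ] symmetricSubalgebra (Fin 3) ℂ :=
  changeOfGenerators.trans (esymmAlgEquiv (Fin 3) ℂ rfl)

theorem coe_gensEquiv (F : MvPolynomial (Fin 3) ℂ) :
    (gensEquiv F : MvPolynomial (Fin 3) ℂ) = aeval gens F := by
  rw [← aeval_esymm_comp_aeval_gensViaEsymm, AlgHom.comp_apply, ← esymmAlgHom_apply]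
  rfl

theorem aeval_gens_injective : Function.Injective (aeval (R := ℂ) gens) := by
  intro F G h
  apply gensEquiv.injective
  ext1
  rw [coe_gensEquiv, coe_gensEquiv, h]

theorem exists_aeval_gens_eq {p : MvPolynomial (Fin 3) ℂ} (hp : p.IsSymmetric) :
    ∃ F : MvPolynomial (Fin 3) ℂ, aeval gens F = p := by
  obtain ⟨F, hF⟩ := gensEquiv.surjective ⟨p, hp⟩
  exact ⟨F, by rw [← coe_gensEquiv, hF]⟩

theorem isSymmetric_aeval_gens (F : MvPolynomial (Fin 3) ℂ) : (aeval gens F).IsSymmetric := by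
  rw [← coe_gensEquiv]
  exact (gensEquiv F).2

theorem Lop_aeval_gens (F : MvPolynomial (Fin 3) ℂ) :
    Lop (aeval gens F) = 3 * aeval gens (pderiv 0 F) := by
  have h0 : totalDeriv (gens 0) = 3 := by simpa [gens, pw_zero] using totalDeriv_pw 0
  have h1 : totalDeriv (gens 1) = 0 := Lop_φ2
  have h2 : totalDeriv (gens 2) = 0 := Lop_φ3
  rw [Lop_eq_totalDeriv, Derivation.map_aeval_mvPolynomial, Fin.sum_univ_three, h0, h1, h2]
  simp [mul_comm]

theorem pderiv_eq_zero_of_Lop_aeval_gens_eq_zero {F : MvPolynomial (Fin 3) ℂ}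
    (hF : Lop (aeval gens F) = 0) : pderiv 0 F = 0 := by
  rw [Lop_aeval_gens, mul_eq_zero] at hF
  refine aeval_gens_injective ?_
  rw [map_zero]
  exact hF.resolve_left (by norm_num)

def φMonomial (q : ℕ × ℕ) : MvPolynomial (Fin 3) ℂ := φ2 ^ q.1 * φ3 ^ q.2

def gensExponent (q : ℕ × ℕ) : Fin 3 →₀ ℕ := Finsupp.single 1 q.1 + Finsupp.single 2 q.2

theorem gensExponent_injective : Function.Injective gensExponent := by
  intro q q' h
  exact Prod.ext (by simpa [gensExponent] using DFunLike.congr_fun h 1)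
    (by simpa [gensExponent] using DFunLike.congr_fun h 2)

theorem aeval_gens_monomial_gensExponent (q : ℕ × ℕ) :
    aeval gens (monomial (gensExponent q) (1 : ℂ)) = φMonomial q := by
  rw [aeval_monomial, gensExponent, Finsupp.prod_add_index' (by simp) (by simp [pow_add])]
  simp [gens, φMonomial]

theorem isSymmetric_φMonomial (q : ℕ × ℕ) : (φMonomial q).IsSymmetric := by
  rw [← aeval_gens_monomial_gensExponent]
  exact isSymmetric_aeval_gens _

theorem Lop_φMonomial (q : ℕ × ℕ) : Lop (φMonomial q) = 0 := by
  rw [← aeval_gens_monomial_gensExponent, Lop_aeval_gens, pderiv_monomial]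
  simp [gensExponent]

theorem linearIndependent_φMonomial : LinearIndependent ℂ φMonomial := by
  have h : φMonomial = (aeval gens).toLinearMap ∘ basisMonomials (Fin 3) ℂ ∘ gensExponent := by
    funext q
    simp only [Function.comp_apply, coe_basisMonomials, AlgHom.toLinearMap_apply,
      aeval_gens_monomial_gensExponent]
  rw [h]
  exact ((basisMonomials (Fin 3) ℂ).linearIndependent.comp _ gensExponent_injective).map' _
    (LinearMap.ker_eq_bot.2 aeval_gens_injective)

theorem aeval_gens_mem_span_φMonomial {F : MvPolynomial (Fin 3) ℂ} (hF : pderiv 0 F = 0) :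
    aeval gens F ∈ Submodule.span ℂ (Set.range φMonomial) := by
  rw [F.as_sum, map_sum]
  refine Submodule.sum_mem _ fun m hm => ?_
  have hm : gensExponent (m 1, m 2) = m := by
    ext i
    fin_cases i <;> simp [gensExponent, apply_eq_zero_of_mem_support_of_pderiv_eq_zero hF hm]
  have key : aeval gens (monomial m (coeff m F)) = coeff m F • φMonomial (m 1, m 2) := by
    rw [← aeval_gens_monomial_gensExponent, hm, ← map_smul, smul_monomial, smul_eq_mul, mul_one]
  rw [key]
  exact Submodule.smul_mem _ _ (Submodule.subset_span ⟨_, rfl⟩)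

theorem isHomogeneous_pw (j : ℕ) : (pw j).IsHomogeneous j :=
  ((isHomogeneous_X_pow _ _).add (isHomogeneous_X_pow _ _)).add (isHomogeneous_X_pow _ _)

theorem isHomogeneous_φ2 : φ2.IsHomogeneous 2 :=
  (isHomogeneous_pw 2).sub (((isHomogeneous_pw 1).pow 2).C_mul _)

theorem isHomogeneous_φ3 : φ3.IsHomogeneous 3 :=
  ((isHomogeneous_pw 3).sub ((isHomogeneous_pw 2).mul (isHomogeneous_pw 1))).add
    (((isHomogeneous_pw 1).pow 3).C_mul _)

theorem isHomogeneous_φMonomial (q : ℕ × ℕ) : (φMonomial q).IsHomogeneous (2 * q.1 + 3 * q.2) :=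
  (isHomogeneous_φ2.pow q.1).mul (isHomogeneous_φ3.pow q.2)

theorem mem_span_φMonomial_of_isSymmetric {p : MvPolynomial (Fin 3) ℂ} {k : ℕ}
    (hs : p.IsSymmetric) (hh : p.IsHomogeneous k) (hL : Lop p = 0) :
    p ∈ Submodule.span ℂ
      (Set.range fun q : {q : ℕ × ℕ // 2 * q.1 + 3 * q.2 = k} => φMonomial q) := by
  obtain ⟨F, rfl⟩ := exists_aeval_gens_eq hs
  exact mem_span_of_isHomogeneous_of_mem_span isHomogeneous_φMonomial hh
    (aeval_gens_mem_span_φMonomial (pderiv_eq_zero_of_Lop_aeval_gens_eq_zero hL))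

/-- `L(φ₂) = 0` and `L(φ₃) = 0`; moreover, for each `k`, the kernel of `L` on the
homogeneous symmetric polynomials of degree `k` has a basis given by the monomials
`φ₂^a φ₃^b` indexed by the nonnegative integer solutions of `2a + 3b = k` — in
particular its dimension is the number of such solutions. -/
theorem stmt18 (K : ℕ → Submodule ℂ (MvPolynomial (Fin 3) ℂ))
    (hK : ∀ (k : ℕ) (p : MvPolynomial (Fin 3) ℂ),
      p ∈ K k ↔ (p.IsSymmetric ∧ p.IsHomogeneous k ∧ Lop p = 0)) :
    Lop φ2 = 0 ∧ Lop φ3 = 0 ∧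
      ∀ k : ℕ, ∃ b : Module.Basis {q : ℕ × ℕ // 2 * q.1 + 3 * q.2 = k} ℂ (K k),
        ∀ q, (b q : MvPolynomial (Fin 3) ℂ) = φ2 ^ q.1.1 * φ3 ^ q.1.2 := by
  refine ⟨Lop_φ2, Lop_φ3, fun k => ?_⟩
  have hKk : K k = Submodule.span ℂ
      (Set.range fun q : {q : ℕ × ℕ // 2 * q.1 + 3 * q.2 = k} => φMonomial q) := by
    refine le_antisymm (fun p hp => ?_) (Submodule.span_le.2 ?_)
    · obtain ⟨hs, hh, hL⟩ := (hK k p).1 hp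
      exact mem_span_φMonomial_of_isSymmetric hs hh hL
    · rintro _ ⟨⟨q, rfl⟩, rfl⟩
      exact (hK _ _).2 ⟨isSymmetric_φMonomial q, isHomogeneous_φMonomial q, Lop_φMonomial q⟩
  refine ⟨(Module.Basis.span (linearIndependent_φMonomial.comp _ Subtype.val_injective)).map
    (LinearEquiv.ofEq _ _ hKk.symm), fun q => ?_⟩
  simp [Module.Basis.span_apply, φMonomial]
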